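/- Let δ ≥ 2 be an integer and n ≥ 2δ + 1. Then λ₁(D(K_δ ∨ (K_{n−2δ} + δK₁))) < λ₁(D(K₁ ∨ (K_{n−δ−1} + K_δ))). -/

import Mathlib

open SimpleGraph Finset

/-- The distance matrix of a graph: the `(i,j)` entry is the graph distance from `i` to `j`. -/
noncomputable def distMatrix {V : Type*} [Fintype V] (G : SimpleGraph V) : Matrix V V ℝ :=
  fun i j => (G.dist i j : ℝ)

/-- The distance spectral radius `λ₁(D(G))`: the largest eigenvalue of the distance matrix. -/
noncomputable def distSpecRad {V : Type*} [Fintype V] (G : SimpleGraph V) : ℝ :=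
  sSup {μ : ℝ | ∃ v : V → ℝ, v ≠ 0 ∧ (distMatrix G).mulVec v = μ • v}

/-- The join `G ∨ H` of two graphs: all edges between the parts are added. -/
def graphJoin {α β : Type*} (G : SimpleGraph α) (H : SimpleGraph β) :
    SimpleGraph (α ⊕ β) where
  Adj x y :=
    match x, y with
    | Sum.inl a, Sum.inl a' => G.Adj a a'
    | Sum.inr b, Sum.inr b' => H.Adj b b'
    | Sum.inl _, Sum.inr _ => True
    | Sum.inr _, Sum.inl _ => True
  symm := ⟨by rintro (a | a) (b | b) h <;> first | exact G.adj_symm h | exact H.adj_symm h | trivial⟩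
  loopless := ⟨by rintro (a | a) h <;> first | exact G.irrefl h | exact H.irrefl h⟩

/-- The disjoint union `G + H` of two graphs. -/
def graphSum {α β : Type*} (G : SimpleGraph α) (H : SimpleGraph β) :
    SimpleGraph (α ⊕ β) where
  Adj x y :=
    match x, y with
    | Sum.inl a, Sum.inl a' => G.Adj a a'
    | Sum.inr b, Sum.inr b' => H.Adj b b'
    | _, _ => False
  symm := ⟨by rintro (a | a) (b | b) h <;> first | exact G.adj_symm h | exact H.adj_symm h | exact h⟩
  loopless := ⟨by rintro (a | a) h <;> first | exact G.irrefl h | exact H.irrefl h⟩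

/-- `m` pairwise disjoint copies of the complete graph `K_p`. -/
def repK (m p : ℕ) : SimpleGraph (Fin m × Fin p) where
  Adj x y := x.1 = y.1 ∧ x ≠ y
  symm := ⟨fun _ _ h => ⟨h.1.symm, h.2.symm⟩⟩
  loopless := ⟨fun _ h => h.2 rfl⟩

/-- The disjoint union of cliques `K_{m 0} + K_{m 1} + ⋯`. -/
def cliquesGraph {c : ℕ} (m : Fin c → ℕ) : SimpleGraph (Σ i, Fin (m i)) where
  Adj x y := x.1 = y.1 ∧ x ≠ y
  symm := ⟨fun _ _ h => ⟨h.1.symm, h.2.symm⟩⟩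
  loopless := ⟨fun _ h => h.2 rfl⟩

/-- `G` is `t`-tough: whenever deleting a vertex set `S` disconnects the graph,
`|S| ≥ t · c(G - S)`. -/
def IsTTough {V : Type*} [Fintype V] (t : ℝ) (G : SimpleGraph V) : Prop :=
  ∀ S : Finset V, ¬ (G.induce ((S : Set V)ᶜ)).Connected →
    t * Nat.card (G.induce ((S : Set V)ᶜ)).ConnectedComponent ≤ (S.card : ℝ)

/-!
Both graphs have diameter two. The top eigenvalue `μ` of the distance matrix of
`G₁ = K_δ ∨ (K_{n-2δ} + δK₁)` has a nonnegative eigenvector, and the eigen-equations force it to be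
constant on the three parts, with values `a, b, c`; they also give `μ (2a - c) = (δ - 2) a + 2c`,
so `c < 2a`. Transplant this vector to `G₂ = K₁ ∨ (K_{n-δ-1} + K_δ)`: one vertex of `K_δ` becomes
the cone vertex, the other `δ - 1` join `K_{n-2δ}` to form `K_{n-δ-1}`, and the `δ` independent
vertices become `K_δ`. The norm is unchanged while the quadratic form grows by
`δ (δ - 1) c (2a - c) > 0`, so the Rayleigh quotient of `G₂` exceeds `μ`.
-/

open Matrix

theorem Matrix.vecMulVec_mulVec_eq_smul {V R : Type*} [Fintype V] [CommSemiring R] (u v w : V → R) :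
    vecMulVec u v *ᵥ w = (v ⬝ᵥ w) • u := by
  simp [vecMulVec_mulVec]

section Spectral

variable {V : Type*} [Fintype V]

theorem Matrix.dotProduct_mulVec_le_abs {A : Matrix V V ℝ} (hA : ∀ i j, 0 ≤ A i j) (x : V → ℝ) :
    x ⬝ᵥ A *ᵥ x ≤ |x| ⬝ᵥ A *ᵥ |x| := by
  simp only [dotProduct, mulVec, Finset.mul_sum]
  refine Finset.sum_le_sum fun i _ ↦ Finset.sum_le_sum fun j _ ↦ ?_
  calc x i * (A i j * x j) ≤ |x i * (A i j * x j)| := le_abs_self _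
    _ = |x| i * (A i j * |x| j) := by simp [abs_mul, abs_of_nonneg (hA i j)]

theorem EuclideanSpace.real_norm_sq_eq_dotProduct (x : EuclideanSpace ℝ V) :
    ‖x‖ ^ 2 = x.ofLp ⬝ᵥ x.ofLp := by
  rw [EuclideanSpace.real_norm_sq_eq]
  simp [dotProduct, sq]

theorem Matrix.eigenvalue_nonneg_of_nonneg {A : Matrix V V ℝ} (hA : ∀ i j, 0 ≤ A i j) {μ : ℝ}
    {x : V → ℝ} (hx : x ≠ 0) (hx_nonneg : 0 ≤ x) (hAx : A *ᵥ x = μ • x) : 0 ≤ μ := by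
  obtain ⟨i, hi⟩ := Function.ne_iff.mp hx
  have hpos : 0 < x i := lt_of_le_of_ne (hx_nonneg i) (Ne.symm hi)
  refine nonneg_of_mul_nonneg_left ?_ hpos
  calc 0 ≤ (A *ᵥ x) i := Finset.sum_nonneg fun j _ ↦ mul_nonneg (hA i j) (hx_nonneg j)
    _ = μ * x i := by rw [hAx, Pi.smul_apply, smul_eq_mul]

theorem Matrix.csSup_eigenvalues_eq {A : Matrix V V ℝ} {μ : ℝ} {x : V → ℝ} (hx : x ≠ 0)
    (hAx : A *ᵥ x = μ • x) (hle : ∀ y, y ⬝ᵥ A *ᵥ y ≤ μ * (y ⬝ᵥ y)) :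
    sSup {ν : ℝ | ∃ v : V → ℝ, v ≠ 0 ∧ A *ᵥ v = ν • v} = μ := by
  refine IsGreatest.csSup_eq ⟨⟨x, hx, hAx⟩, ?_⟩
  rintro ν ⟨v, hv, hAv⟩
  have hvv : 0 < v ⬝ᵥ v := by simpa using dotProduct_self_star_pos_iff.mpr hv
  have := hle v
  rw [hAv, dotProduct_smul, smul_eq_mul] at this
  exact le_of_mul_le_mul_right this hvv

variable [DecidableEq V]

theorem Matrix.reApplyInnerSelf_toEuclideanCLM (A : Matrix V V ℝ) (x : EuclideanSpace ℝ V) :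
    (toEuclideanCLM (𝕜 := ℝ) A).reApplyInnerSelf x = x.ofLp ⬝ᵥ A *ᵥ x.ofLp := by
  rw [ContinuousLinearMap.reApplyInnerSelf_apply, real_inner_comm]
  exact inner_toEuclideanCLM A x x

theorem Matrix.IsHermitian.exists_nonneg_eigenvector_of_nonneg [Nonempty V] {A : Matrix V V ℝ}
    (hA : A.IsHermitian) (hA_nonneg : ∀ i j, 0 ≤ A i j) :
    ∃ μ : ℝ, ∃ x : V → ℝ, x ≠ 0 ∧ 0 ≤ x ∧ A *ᵥ x = μ • x ∧
      ∀ y : V → ℝ, y ⬝ᵥ A *ᵥ y ≤ μ * (y ⬝ᵥ y) := by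
  set T := toEuclideanCLM (𝕜 := ℝ) A
  have hT : IsSelfAdjoint T := IsSelfAdjoint.map hA _
  have hq : ∀ x, T.reApplyInnerSelf x = x.ofLp ⬝ᵥ A *ᵥ x.ofLp :=
    reApplyInnerSelf_toEuclideanCLM A
  obtain ⟨x₀, hx₀, hmax⟩ := (isCompact_sphere (0 : EuclideanSpace ℝ V) 1).exists_isMaxOn
    (NormedSpace.sphere_nonempty.mpr zero_le_one) T.reApplyInnerSelf_continuous.continuousOn
  set w : EuclideanSpace ℝ V := WithLp.toLp 2 |x₀.ofLp|
  have hw : ‖w‖ = 1 := by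
    rw [← mem_sphere_zero_iff_norm.mp hx₀, ← sq_eq_sq₀ (norm_nonneg _) (norm_nonneg _),
      EuclideanSpace.real_norm_sq_eq_dotProduct, EuclideanSpace.real_norm_sq_eq_dotProduct]
    simp [w, dotProduct, abs_mul_abs_self]
  -- for a nonnegative matrix, `|x₀|` does at least as well as `x₀` in the Rayleigh quotient
  have hw_max : IsMaxOn T.reApplyInnerSelf (Metric.sphere 0 ‖w‖) w := by
    intro z hz
    rw [hw] at hz
    calc T.reApplyInnerSelf z ≤ T.reApplyInnerSelf x₀ := hmax hz
      _ ≤ T.reApplyInnerSelf w := by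
        simpa only [hq] using dotProduct_mulVec_le_abs hA_nonneg x₀.ofLp
  have hw₀ : w ≠ 0 := by
    rintro h
    simp [h] at hw
  have hbdd : BddAbove (Set.range fun z : {z : EuclideanSpace ℝ V // z ≠ 0} ↦
      T.rayleighQuotient z) :=
    ⟨‖T‖, by rintro _ ⟨z, rfl⟩; exact (le_abs_self _).trans (T.rayleighQuotient_le_norm z)⟩
  refine ⟨_, w.ofLp, by simpa using hw₀, fun i ↦ abs_nonneg _,
    congrArg WithLp.ofLp (Module.End.mem_eigenspace_iff.mp
      (hT.hasEigenvector_of_isMaxOn hw₀ hw_max).1), fun y ↦ ?_⟩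
  rcases eq_or_ne y 0 with rfl | hy
  · simp
  have hy' : WithLp.toLp 2 y ≠ (0 : EuclideanSpace ℝ V) := by simpa using hy
  have hpos : 0 < ‖WithLp.toLp 2 y‖ ^ 2 := by positivity
  have := le_ciSup hbdd ⟨_, hy'⟩
  rwa [ContinuousLinearMap.rayleighQuotient, div_le_iff₀ hpos, hq,
    EuclideanSpace.real_norm_sq_eq_dotProduct] at this

end Spectral

theorem distMatrix_isHermitian {V : Type*} [Fintype V] (G : SimpleGraph V) :
    (distMatrix G).IsHermitian := by
  ext i j
  simp [distMatrix, dist_comm]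

theorem exists_nonneg_eigenvector_distSpecRad {V : Type*} [Fintype V] [Nonempty V]
    (G : SimpleGraph V) :
    ∃ x : V → ℝ, x ≠ 0 ∧ 0 ≤ x ∧ distMatrix G *ᵥ x = distSpecRad G • x ∧
      ∀ y : V → ℝ, y ⬝ᵥ distMatrix G *ᵥ y ≤ distSpecRad G * (y ⬝ᵥ y) := by
  classical
  obtain ⟨μ, x, hx, hx_nonneg, hAx, hle⟩ := (distMatrix_isHermitian G).exists_nonneg_eigenvector_of_nonneg
    fun i j ↦ Nat.cast_nonneg (G.dist i j)
  rw [distSpecRad, csSup_eigenvalues_eq hx hAx hle]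
  exact ⟨x, hx, hx_nonneg, hAx, hle⟩

theorem SimpleGraph.dist_eq_two_of_mem_commonNeighbors {V : Type*} {G : SimpleGraph V} {u v w : V}
    (huv : u ≠ v) (hadj : ¬ G.Adj u v) (hw : w ∈ G.commonNeighbors u v) : G.dist u v = 2 := by
  rw [dist, G.edist_eq_two_iff.mpr ⟨huv, hadj, w, hw⟩]
  rfl

section Join

variable {α β : Type*} {G : SimpleGraph α} {H : SimpleGraph β}

@[simp]
theorem dist_graphJoin_inl_inr (a : α) (b : β) : (graphJoin G H).dist (.inl a) (.inr b) = 1 :=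
  dist_eq_one_iff_adj.mpr trivial

@[simp]
theorem dist_graphJoin_inr_inl (b : β) (a : α) : (graphJoin G H).dist (.inr b) (.inl a) = 1 :=
  dist_eq_one_iff_adj.mpr trivial

theorem dist_graphJoin_top_inl_inl [DecidableEq α] (a a' : α) :
    (graphJoin (⊤ : SimpleGraph α) H).dist (.inl a) (.inl a') = if a = a' then 0 else 1 := by
  split_ifs with h
  · simp [h]
  · exact dist_eq_one_iff_adj.mpr h

open Classical in
theorem dist_graphJoin_inr_inr [Nonempty α] (b b' : β) :
    (graphJoin G H).dist (.inr b) (.inr b') = if b = b' then 0 else if H.Adj b b' then 1 else 2 := by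
  split_ifs with h hadj
  · simp [h]
  · exact dist_eq_one_iff_adj.mpr hadj
  · obtain ⟨a⟩ := ‹Nonempty α›
    exact dist_eq_two_of_mem_commonNeighbors (by simpa) hadj (w := .inl a) ⟨trivial, trivial⟩

end Join

section ThreePart

variable {α β γ : Type*}

def blockVec (a b c : ℝ) : α ⊕ β ⊕ γ → ℝ := Sum.elim (fun _ ↦ a) (Sum.elim (fun _ ↦ b) fun _ ↦ c)

@[simp] theorem blockVec_inl (a b c : ℝ) (i : α) : (blockVec a b c : α ⊕ β ⊕ γ → ℝ) (.inl i) = a :=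
  rfl

@[simp] theorem blockVec_inr_inl (a b c : ℝ) (j : β) :
    (blockVec a b c : α ⊕ β ⊕ γ → ℝ) (.inr (.inl j)) = b :=
  rfl

@[simp] theorem blockVec_inr_inr (a b c : ℝ) (k : γ) :
    (blockVec a b c : α ⊕ β ⊕ γ → ℝ) (.inr (.inr k)) = c :=
  rfl

theorem blockVec_one_one_one : (blockVec 1 1 1 : α ⊕ β ⊕ γ → ℝ) = 1 := by
  ext (i | j | k) <;> rfl

variable [Fintype α] [Fintype β] [Fintype γ]

theorem dotProduct_blockVec_blockVec (a b c a' b' c' : ℝ) :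
    (blockVec a b c : α ⊕ β ⊕ γ → ℝ) ⬝ᵥ blockVec a' b' c' =
      Fintype.card α * (a * a') + Fintype.card β * (b * b') + Fintype.card γ * (c * c') := by
  simp [dotProduct, Fintype.sum_sum_type, add_assoc]

variable [DecidableEq α] [DecidableEq β] [DecidableEq γ]

theorem distMatrix_join_top_sum_top [Nonempty α] :
    distMatrix (graphJoin (⊤ : SimpleGraph α) (graphSum (⊤ : SimpleGraph β) (⊤ : SimpleGraph γ))) =
      vecMulVec 1 1 - 1 + vecMulVec (blockVec 0 1 0) (blockVec 0 0 1) +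
        vecMulVec (blockVec 0 0 1) (blockVec 0 1 0) := by
  ext u v
  rcases u with a | b | c <;> rcases v with a' | b' | c' <;>
    simp [distMatrix, dist_graphJoin_top_inl_inl, dist_graphJoin_inr_inr, graphSum,
      vecMulVec_apply, one_apply, blockVec] <;>
    (try split_ifs) <;> norm_num

theorem distMatrix_join_top_sum_bot [Nonempty α] :
    distMatrix (graphJoin (⊤ : SimpleGraph α) (graphSum (⊤ : SimpleGraph β) (⊥ : SimpleGraph γ))) =
      vecMulVec 1 1 - 1 + vecMulVec (blockVec 0 1 0) (blockVec 0 0 1) +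
        vecMulVec (blockVec 0 0 1) (blockVec 0 1 0) +
        (vecMulVec (blockVec 0 0 1) (blockVec 0 0 1) - diagonal (blockVec 0 0 1)) := by
  ext u v
  rcases u with a | b | c <;> rcases v with a' | b' | c' <;>
    simp [distMatrix, dist_graphJoin_top_inl_inl, dist_graphJoin_inr_inr, graphSum,
      vecMulVec_apply, one_apply, blockVec, diagonal_apply] <;>
    (try split_ifs) <;> norm_num

theorem dotProduct_distMatrix_join_top_sum_top_mulVec [Nonempty α] (x : α ⊕ β ⊕ γ → ℝ) :
    x ⬝ᵥ distMatrix (graphJoin (⊤ : SimpleGraph α)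
        (graphSum (⊤ : SimpleGraph β) (⊤ : SimpleGraph γ))) *ᵥ x =
      (1 ⬝ᵥ x) ^ 2 - x ⬝ᵥ x + 2 * (blockVec 0 1 0 ⬝ᵥ x) * (blockVec 0 0 1 ⬝ᵥ x) := by
  simp only [distMatrix_join_top_sum_top, add_mulVec, sub_mulVec, one_mulVec,
    vecMulVec_mulVec_eq_smul, dotProduct_add, dotProduct_sub, dotProduct_smul, smul_eq_mul]
  rw [dotProduct_comm x 1, dotProduct_comm x (blockVec 0 1 0), dotProduct_comm x (blockVec 0 0 1)]
  ring

theorem distMatrix_join_top_sum_bot_mulVec_apply [Nonempty α] (x : α ⊕ β ⊕ γ → ℝ) (u : α ⊕ β ⊕ γ) :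
    (distMatrix (graphJoin (⊤ : SimpleGraph α)
        (graphSum (⊤ : SimpleGraph β) (⊥ : SimpleGraph γ))) *ᵥ x) u =
      1 ⬝ᵥ x - x u + (blockVec 0 0 1 ⬝ᵥ x) * blockVec 0 1 0 u +
        (blockVec 0 1 0 ⬝ᵥ x) * blockVec 0 0 1 u +
        ((blockVec 0 0 1 ⬝ᵥ x) * blockVec 0 0 1 u - blockVec 0 0 1 u * x u) := by
  simp only [distMatrix_join_top_sum_bot, add_mulVec, sub_mulVec, one_mulVec,
    vecMulVec_mulVec_eq_smul, Pi.add_apply, Pi.sub_apply, Pi.smul_apply, smul_eq_mul, mulVec_diagonal,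
    Pi.one_apply, mul_one]

theorem exists_eq_blockVec_of_distMatrix_join_top_sum_bot_mulVec [Nonempty α]
    {x : α ⊕ β ⊕ γ → ℝ} {μ : ℝ} (hμ : 0 ≤ μ)
    (hx : distMatrix (graphJoin (⊤ : SimpleGraph α)
        (graphSum (⊤ : SimpleGraph β) (⊥ : SimpleGraph γ))) *ᵥ x = μ • x) :
    ∃ a b c, x = blockVec a b c := by
  set S := 1 ⬝ᵥ x
  set B := blockVec 0 1 0 ⬝ᵥ x
  set C := blockVec 0 0 1 ⬝ᵥ x
  refine ⟨S / (μ + 1), (S + C) / (μ + 1), (S + B + C) / (μ + 2), funext fun u ↦ ?_⟩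
  have hu := congrFun hx u
  rw [distMatrix_join_top_sum_bot_mulVec_apply] at hu
  rcases u with i | j | k <;> simp only [blockVec_inl, blockVec_inr_inl, blockVec_inr_inr,
    Pi.smul_apply, smul_eq_mul] at hu ⊢ <;> field_simp <;> linarith

theorem distMatrix_join_top_sum_bot_mulVec_blockVec [Nonempty α] (a b c : ℝ) :
    distMatrix (graphJoin (⊤ : SimpleGraph α)
        (graphSum (⊤ : SimpleGraph β) (⊥ : SimpleGraph γ))) *ᵥ blockVec a b c =
      blockVec ((Fintype.card α - 1) * a + Fintype.card β * b + Fintype.card γ * c)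
        (Fintype.card α * a + (Fintype.card β - 1) * b + 2 * Fintype.card γ * c)
        (Fintype.card α * a + 2 * Fintype.card β * b + 2 * (Fintype.card γ - 1) * c) := by
  ext u
  rw [distMatrix_join_top_sum_bot_mulVec_apply, ← blockVec_one_one_one, dotProduct_blockVec_blockVec,
    dotProduct_blockVec_blockVec, dotProduct_blockVec_blockVec]
  rcases u with i | j | k <;> simp only [blockVec_inl, blockVec_inr_inl, blockVec_inr_inr] <;> ring

theorem exists_perron_blockVec_join_top_sum_bot [Nonempty α] [Nonempty β] [Nonempty γ]
    (hα : 2 ≤ Fintype.card α) :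
    ∃ a b c : ℝ, 0 < c ∧ c < 2 * a ∧
      distMatrix (graphJoin (⊤ : SimpleGraph α)
          (graphSum (⊤ : SimpleGraph β) (⊥ : SimpleGraph γ))) *ᵥ blockVec a b c =
        distSpecRad (graphJoin (⊤ : SimpleGraph α)
          (graphSum (⊤ : SimpleGraph β) (⊥ : SimpleGraph γ))) • blockVec a b c := by
  set G := graphJoin (⊤ : SimpleGraph α) (graphSum (⊤ : SimpleGraph β) (⊥ : SimpleGraph γ))
  obtain ⟨x, hx₀, hx_nonneg, hx, -⟩ := exists_nonneg_eigenvector_distSpecRad G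
  have hμ := eigenvalue_nonneg_of_nonneg (fun i j ↦ Nat.cast_nonneg _) hx₀ hx_nonneg hx
  obtain ⟨a, b, c, rfl⟩ := exists_eq_blockVec_of_distMatrix_join_top_sum_bot_mulVec hμ hx
  obtain ⟨i⟩ := ‹Nonempty α›
  obtain ⟨j⟩ := ‹Nonempty β›
  obtain ⟨k⟩ := ‹Nonempty γ›
  have ha : 0 ≤ a := hx_nonneg (.inl i)
  have hb : 0 ≤ b := hx_nonneg (.inr (.inl j))
  have hc : 0 ≤ c := hx_nonneg (.inr (.inr k))
  have eqs := hx
  rw [distMatrix_join_top_sum_bot_mulVec_blockVec] at eqs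
  have eq_a := congrFun eqs (.inl i)
  have eq_c := congrFun eqs (.inr (.inr k))
  simp only [blockVec_inl, blockVec_inr_inr, Pi.smul_apply, smul_eq_mul] at eq_a eq_c
  have hp : (2 : ℝ) ≤ Fintype.card α := by exact_mod_cast hα
  have hq : (1 : ℝ) ≤ Fintype.card β := by exact_mod_cast Fintype.card_pos
  have hc_pos : 0 < c := by
    refine hc.lt_of_ne fun hc_zero ↦ hx₀ ?_
    subst hc_zero
    obtain rfl : a = 0 := by nlinarith
    obtain rfl : b = 0 := by nlinarith
    ext (i | j | k) <;> rfl
  refine ⟨a, b, c, hc_pos, ?_, hx⟩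
  have h2ac : distSpecRad G * (2 * a - c) = (Fintype.card α - 2) * a + 2 * c := by
    linear_combination eq_c - 2 * eq_a
  have h2ac_pos : 0 < distSpecRad G * (2 * a - c) := by rw [h2ac]; nlinarith
  linarith [pos_of_mul_pos_right h2ac_pos hμ]

end ThreePart

theorem distSpecRad_join_top_sum_bot_lt (e m : ℕ) (he : 1 ≤ e) (hm : 1 ≤ m) :
    distSpecRad (graphJoin (⊤ : SimpleGraph (Fin (e + 1)))
        (graphSum (⊤ : SimpleGraph (Fin m)) (⊥ : SimpleGraph (Fin (e + 1))))) <
      distSpecRad (graphJoin (⊤ : SimpleGraph (Fin 1))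
        (graphSum (⊤ : SimpleGraph (Fin (e + m))) (⊤ : SimpleGraph (Fin (e + 1))))) := by
  set G₁ := graphJoin (⊤ : SimpleGraph (Fin (e + 1)))
    (graphSum (⊤ : SimpleGraph (Fin m)) (⊥ : SimpleGraph (Fin (e + 1))))
  set G₂ := graphJoin (⊤ : SimpleGraph (Fin 1))
    (graphSum (⊤ : SimpleGraph (Fin (e + m))) (⊤ : SimpleGraph (Fin (e + 1))))
  set μ := distSpecRad G₁
  have : Nonempty (Fin m) := ⟨⟨0, hm⟩⟩
  obtain ⟨a, b, c, hc, hca, hx⟩ :=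
    exists_perron_blockVec_join_top_sum_bot (α := Fin (e + 1)) (β := Fin m) (γ := Fin (e + 1))
      (by simpa using he)
  obtain ⟨-, -, -, -, hray⟩ := exists_nonneg_eigenvector_distSpecRad G₂
  rw [distMatrix_join_top_sum_bot_mulVec_blockVec] at hx
  have eq_a := congrFun hx (.inl 0)
  have eq_b := congrFun hx (.inr (.inl ⟨0, hm⟩))
  have eq_c := congrFun hx (.inr (.inr 0))
  simp only [blockVec_inl, blockVec_inr_inl, blockVec_inr_inr, Pi.smul_apply, smul_eq_mul,
    Fintype.card_fin, Nat.cast_add, Nat.cast_one] at eq_a eq_b eq_c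
  set x : Fin (e + 1) ⊕ Fin m ⊕ Fin (e + 1) → ℝ := blockVec a b c
  set y : Fin 1 ⊕ Fin (e + m) ⊕ Fin (e + 1) → ℝ :=
    Sum.elim (fun _ ↦ a) (Sum.elim (Fin.append (fun _ : Fin e ↦ a) fun _ : Fin m ↦ b) fun _ ↦ c)
  have hyy : y ⬝ᵥ y = x ⬝ᵥ x := by
    simp only [dotProduct, Fintype.sum_sum_type, univ_unique, Fin.default_eq_zero, Sum.elim_inl,
      sum_const, card_singleton, one_smul, Sum.elim_inr, Fin.sum_univ_add, Fin.append_left,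
      card_univ, Fintype.card_fin, nsmul_eq_mul, Fin.append_right, Nat.cast_add, Nat.cast_one,
      blockVec_inl, blockVec_inr_inl, blockVec_inr_inr, y, x]
    ring
  have hy : y ⬝ᵥ distMatrix G₂ *ᵥ y = μ * (x ⬝ᵥ x) + e * (e + 1) * c * (2 * a - c) := by
    rw [dotProduct_distMatrix_join_top_sum_top_mulVec]
    simp only [dotProduct, Pi.one_apply, one_mul, Fintype.sum_sum_type, univ_unique,
      Fin.default_eq_zero, Sum.elim_inl, sum_const, card_singleton, one_smul, Sum.elim_inr,
      Fin.sum_univ_add, Fin.append_left, card_univ, Fintype.card_fin, nsmul_eq_mul,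
      Fin.append_right, Nat.cast_add, Nat.cast_one, blockVec_inl, zero_mul,
      blockVec_inr_inl, blockVec_inr_inr, zero_add, y, x]
    linear_combination (e + 1) * a * eq_a + m * b * eq_b + (e + 1) * c * eq_c
  have hgain : 0 < (e : ℝ) * (e + 1) * c * (2 * a - c) := by
    have : (0 : ℝ) < e := by exact_mod_cast he
    have : 0 < 2 * a - c := by linarith
    positivity
  have hxx : 0 ≤ x ⬝ᵥ x := Fintype.sum_nonneg fun i ↦ mul_self_nonneg (x i)
  refine lt_of_mul_lt_mul_right ?_ hxx
  calc μ * (x ⬝ᵥ x) < y ⬝ᵥ distMatrix G₂ *ᵥ y := by linarith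
    _ ≤ _ * (y ⬝ᵥ y) := hray y
    _ = _ := by rw [hyy]

theorem stmt10 (δ n : ℕ) (hδ : 2 ≤ δ) (hn : 2 * δ + 1 ≤ n) :
    distSpecRad (graphJoin (⊤ : SimpleGraph (Fin δ))
        (graphSum (⊤ : SimpleGraph (Fin (n - 2 * δ))) (⊥ : SimpleGraph (Fin δ))))
      < distSpecRad (graphJoin (⊤ : SimpleGraph (Fin 1))
        (graphSum (⊤ : SimpleGraph (Fin (n - δ - 1))) (⊤ : SimpleGraph (Fin δ)))) := by
  obtain ⟨e, rfl⟩ : ∃ e, δ = e + 1 := ⟨δ - 1, by omega⟩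
  obtain ⟨m, rfl⟩ : ∃ m, n = m + 2 * (e + 1) := ⟨n - 2 * (e + 1), by omega⟩
  rw [show m + 2 * (e + 1) - 2 * (e + 1) = m by omega,
    show m + 2 * (e + 1) - (e + 1) - 1 = e + m by omega]
  exact distSpecRad_join_top_sum_bot_lt e m (by omega) (by omega)
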